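/- arXiv:1405.6560 — 3 statements merged into one kernel-verified Lean document; each statement's English description precedes it below -/
import Mathlib

section
/- For any ε > 0 there exist β = β(ε) > 0 and n₀ = n₀(ε) ∈ ℕ such that the following holds. For every tree T with |T| = n ≥ n₀ vertices and every subset L ⊆ V(T), there are subtrees S, T₁, T₂ of T covering T (every vertex of T lies in one of them) such that |S| ≤ εn, S contains at least β|L| vertices of L, and T₁ and T₂ are vertex-disjoint and each intersects S in exactly one vertex. -/
/-!
Split the tree recursively into *pieces*: connected sets of at most `m ≤ εn` vertices that
are attached to the rest of the tree at no more than two vertices. A connected set `K` attached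
at the vertices of `M`, `|M| ≤ 2`, is cut at a vertex `c` that puts the vertices of `M` into
different components of `K - c` and such that every component meeting `M` (every component, if
`|M| ≤ 1`) has at most `|K| / 2` vertices: among the separating vertices take one minimising the
largest such component; in a tree one could otherwise step towards it. The small components avoiding `M` are greedily bundled
with `c` into `O(n / m)` pieces, and the other `O(n / m)` components, each attached at its
neighbour of `c` and at most one vertex of `M`, are split recursively. Each level halves the
size or drops the number of attachment vertices from two to one, so after `O(log (n / m))`
levels the tree is covered by `(1/ε)^O(log (1/ε))` pieces, one of which contains a `β`-fraction
of `L`. Enlarged to have exactly two attachment vertices `u ≠ v`, it is `S`; `T₁` and `T₂` are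
the parts of the tree hanging off `S` at `u` and at `v`.
-/

/-- `W` spans a subtree of the tree `T`: the induced subgraph on `W` is nonempty and
connected (hence, inside a tree, it is a subtree). -/
def IsSubtree {V : Type*} (T : SimpleGraph V) (W : Finset V) : Prop :=
  W.Nonempty ∧ (T.induce (↑W : Set V)).Connected

open Finset

namespace SimpleGraph

section Reachability

variable {V : Type*} {T : SimpleGraph V}

def ReachableIn (T : SimpleGraph V) (W : Finset V) (x y : V) : Prop :=
  ∃ p : T.Walk x y, ∀ z ∈ p.support, z ∈ W

def ConnectedIn (T : SimpleGraph V) (W : Finset V) : Prop :=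
  ∀ x ∈ W, ∀ y ∈ W, T.ReachableIn W x y

namespace ReachableIn

variable {W W' : Finset V} {x y z : V}

theorem mem_right (h : T.ReachableIn W x y) : y ∈ W :=
  h.elim fun p hp => hp y p.end_mem_support

theorem refl (hx : x ∈ W) : T.ReachableIn W x x :=
  ⟨.nil, by simpa using hx⟩

theorem symm (h : T.ReachableIn W x y) : T.ReachableIn W y x :=
  h.elim fun p hp => ⟨p.reverse, by simpa using hp⟩

theorem trans (h : T.ReachableIn W x y) (h' : T.ReachableIn W y z) : T.ReachableIn W x z := by
  obtain ⟨p, hp⟩ := h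
  obtain ⟨q, hq⟩ := h'
  refine ⟨p.append q, fun u hu => ?_⟩
  rcases (Walk.mem_support_append_iff _ _).1 hu with hu | hu
  exacts [hp u hu, hq u hu]

theorem mono (h : T.ReachableIn W x y) (hW : W ⊆ W') : T.ReachableIn W' x y :=
  h.elim fun p hp => ⟨p, fun u hu => hW (hp u hu)⟩

theorem of_adj (hx : x ∈ W) (hy : y ∈ W) (hxy : T.Adj x y) : T.ReachableIn W x y :=
  ⟨hxy.toWalk, by simp [hx, hy]⟩

theorem of_mem_support [DecidableEq V] (p : T.Walk x y) (hp : ∀ u ∈ p.support, u ∈ W)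
    (hz : z ∈ p.support) : T.ReachableIn W x z :=
  ⟨p.takeUntil z hz, fun u hu => hp u (p.support_takeUntil_subset_support hz hu)⟩

theorem exists_adj_first_mem [DecidableEq V] {S : Finset V} (h : T.ReachableIn W x y)
    (hx : x ∉ S) (hy : y ∈ S) :
    ∃ a ∉ S, ∃ s ∈ W ∩ S, T.Adj a s ∧ T.ReachableIn (W \ S) x a := by
  obtain ⟨p, hp⟩ := h
  induction p with
  | nil => exact absurd hy hx
  | @cons x b y hxb p ih =>
    have hx' : x ∈ W \ S := mem_sdiff.2 ⟨hp x (by simp), hx⟩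
    by_cases hb : b ∈ S
    · exact ⟨x, hx, b, mem_inter.2 ⟨hp b (by simp), hb⟩, hxb, refl hx'⟩
    · obtain ⟨a, ha, s, hs, has, hba⟩ := ih hb hy (fun u hu => hp u (by simp [hu]))
      exact ⟨a, ha, s, hs, has, (of_adj hx' (mem_sdiff.2 ⟨hp b (by simp), hb⟩) hxb).trans hba⟩

end ReachableIn

theorem ConnectedIn.of_forall_reachableIn {W : Finset V} {c : V}
    (h : ∀ x ∈ W, T.ReachableIn W x c) : T.ConnectedIn W :=
  fun x hx y hy => (h x hx).trans (h y hy).symm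

theorem connectedIn_pair [DecidableEq V] {x y : V} (hxy : T.Adj x y) : T.ConnectedIn {x, y} :=
  .of_forall_reachableIn (c := y) fun z hz => by
    rcases mem_insert.1 hz with rfl | hz
    · exact .of_adj (by simp) (by simp) hxy
    · rw [mem_singleton.1 hz]
      exact .refl (by simp)

theorem Connected.connectedIn_univ [Fintype V] (hT : T.Connected) : T.ConnectedIn univ :=
  fun x _ y _ => ⟨(hT.preconnected x y).some, fun _ _ => mem_univ _⟩

theorem ConnectedIn.isSubtree {W : Finset V} (hW : T.ConnectedIn W) (hne : W.Nonempty) :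
    IsSubtree T W := by
  refine ⟨hne, (connected_iff _).2 ⟨fun ⟨x, hx⟩ ⟨y, hy⟩ => ?_, hne.coe_sort⟩⟩
  obtain ⟨p, hp⟩ := hW x hx y hy
  exact (p.induce (W : Set V) hp).reachable

theorem IsAcyclic.eq_of_adj_of_reachableIn [DecidableEq V] (hT : T.IsAcyclic) {W : Finset V}
    {c z₁ z₂ : V} (hc : c ∉ W) (h : T.ReachableIn W z₁ z₂) (h₁ : T.Adj z₁ c) (h₂ : T.Adj z₂ c) :
    z₁ = z₂ := by
  by_contra hne
  obtain ⟨p, hp⟩ := h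
  have hpath : (Walk.cons h₁ (Walk.cons h₂.symm Walk.nil)).IsPath := by
    simp [Walk.isPath_def, hne, h₁.ne, h₂.ne.symm]
  apply hc
  apply hp _ (p.support_toPath_subset_support _)
  rw [(hT.subsingleton_path _ _).elim p.toPath ⟨_, hpath⟩]
  simp

end Reachability

section Components

variable {V : Type*} {T : SimpleGraph V}

open Classical in
/-- The component of `x` in the subgraph induced on `W` (empty if `x ∉ W`). -/
noncomputable def compIn (T : SimpleGraph V) (W : Finset V) (x : V) : Finset V :=
  W.filter (T.ReachableIn W x)

variable {W K M : Finset V} {c x y : V}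

@[simp]
theorem mem_compIn : y ∈ T.compIn W x ↔ T.ReachableIn W x y := by
  classical
  simpa [compIn] using fun h => h.mem_right

theorem compIn_subset : T.compIn W x ⊆ W :=
  fun _ hy => (mem_compIn.1 hy).mem_right

theorem mem_compIn_self (hx : x ∈ W) : x ∈ T.compIn W x :=
  mem_compIn.2 (.refl hx)

theorem compIn_eq_of_mem (hy : y ∈ T.compIn W x) : T.compIn W y = T.compIn W x := by
  ext z
  simp only [mem_compIn]
  exact ⟨(mem_compIn.1 hy).trans, (mem_compIn.1 hy).symm.trans⟩

theorem adj_mem_compIn {a b : V} (ha : a ∈ T.compIn W x) (hb : b ∈ W) (hab : T.Adj a b) :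
    b ∈ T.compIn W x :=
  mem_compIn.2 ((mem_compIn.1 ha).trans (.of_adj (compIn_subset ha) hb hab))

theorem compIn_subset_of_closed [DecidableEq V] {X : Finset V}
    (hX : ∀ a ∈ X, ∀ b ∈ W, T.Adj a b → b ∈ X) (hx : x ∈ X) : T.compIn W x ⊆ X := by
  intro y hy
  by_contra hyX
  obtain ⟨a, haX, s, hs, has, hya⟩ := (mem_compIn.1 hy).symm.exists_adj_first_mem hyX hx
  exact haX (hX s (mem_inter.1 hs).2 a (sdiff_subset hya.mem_right) has.symm)

theorem connectedIn_compIn [DecidableEq V] : T.ConnectedIn (T.compIn W x) := by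
  refine .of_forall_reachableIn (c := x) fun y hy => ?_
  obtain ⟨p, hp⟩ := mem_compIn.1 hy
  exact ⟨p.reverse, fun z hz => mem_compIn.2 (.of_mem_support p hp (by simpa using hz))⟩

theorem disjoint_compIn_of_ne (h : T.compIn W x ≠ T.compIn W y) :
    Disjoint (T.compIn W x) (T.compIn W y) :=
  Finset.disjoint_left.2 fun _ hx hy => h ((compIn_eq_of_mem hx).symm.trans (compIn_eq_of_mem hy))

variable [DecidableEq V]

noncomputable def compsIn (T : SimpleGraph V) (W : Finset V) : Finset (Finset V) :=
  W.image (T.compIn W)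

theorem sum_card_compsIn : ∑ D ∈ T.compsIn W, D.card = W.card := by
  rw [compsIn, ← card_biUnion]
  · congr 1
    ext y
    simp only [mem_biUnion, mem_image]
    refine ⟨fun ⟨_, ⟨x, _, rfl⟩, hy⟩ => compIn_subset hy, fun hy => ⟨_, ⟨y, hy, rfl⟩, ?_⟩⟩
    exact mem_compIn_self hy
  · intro D₁ h₁ D₂ h₂ hne
    obtain ⟨x, -, rfl⟩ := mem_image.1 (mem_coe.1 h₁)
    obtain ⟨y, -, rfl⟩ := mem_image.1 (mem_coe.1 h₂)
    exact disjoint_compIn_of_ne hne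

theorem subset_of_mem_compsIn {D : Finset V} (hD : D ∈ T.compsIn W) : D ⊆ W := by
  obtain ⟨x, -, rfl⟩ := mem_image.1 hD
  exact compIn_subset

theorem card_compsIn_filter_meet_le :
    ((T.compsIn W).filter fun D => (M ∩ D).Nonempty).card ≤ M.card := by
  refine (card_le_card (t := M.image (T.compIn W)) fun D hD => ?_).trans card_image_le
  obtain ⟨hD, z, hz⟩ := mem_filter.1 hD
  obtain ⟨x, -, rfl⟩ := mem_image.1 hD
  exact mem_image.2 ⟨z, (mem_inter.1 hz).1, compIn_eq_of_mem (mem_inter.1 hz).2⟩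

theorem mul_card_compsIn_filter_lt_le (a : ℕ) :
    a * ((T.compsIn W).filter fun D => a < D.card).card ≤ W.card := by
  calc a * ((T.compsIn W).filter fun D => a < D.card).card
      ≤ ∑ D ∈ (T.compsIn W).filter fun D => a < D.card, D.card := by
        rw [mul_comm, ← smul_eq_mul]
        exact card_nsmul_le_sum _ _ _ fun D hD => (mem_filter.1 hD).2.le
    _ ≤ ∑ D ∈ T.compsIn W, D.card := sum_le_sum_of_subset (filter_subset _ _)
    _ = W.card := sum_card_compsIn

theorem exists_adj_mem_compIn_erase (hK : T.ConnectedIn K) (hc : c ∈ K) (hx : x ∈ K.erase c) :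
    ∃ z ∈ T.compIn (K.erase c) x, T.Adj z c := by
  obtain ⟨a, ha, s, hs, has, hxa⟩ := (hK x (mem_of_mem_erase hx) c hc).exists_adj_first_mem
    (S := {c}) (by simpa using ne_of_mem_erase hx) (mem_singleton_self c)
  rw [mem_singleton.1 (mem_inter.1 hs).2] at has
  rw [sdiff_singleton_eq_erase] at hxa
  exact ⟨a, mem_compIn.2 hxa, has⟩

theorem eq_or_notMem_of_adj_compIn_erase {z : V} (hz : z ∈ T.compIn (K.erase c) x)
    (hy : y ∉ T.compIn (K.erase c) x) (hzy : T.Adj z y) : y = c ∨ y ∉ K := by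
  by_contra! h
  exact hy (adj_mem_compIn hz (mem_erase.2 h) hzy)

end Components

section Pieces

variable {V : Type*} {T : SimpleGraph V}

def vertexBoundary (T : SimpleGraph V) (K : Finset V) : Set V :=
  {z | z ∈ K ∧ ∃ y ∉ K, T.Adj z y}

def IsPiece (T : SimpleGraph V) (m : ℕ) (P : Finset V) : Prop :=
  P.Nonempty ∧ T.ConnectedIn P ∧ P.card ≤ m ∧
    ∃ A : Finset V, A.card ≤ 2 ∧ T.vertexBoundary P ⊆ A

theorem isPiece_singleton {m : ℕ} (hm : 0 < m) (c : V) : T.IsPiece m {c} :=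
  ⟨singleton_nonempty c, .of_forall_reachableIn (c := c) fun y hy => by
    rw [mem_singleton.1 hy]; exact .refl (mem_singleton_self c),
    by rw [card_singleton]; exact hm, {c}, by simp, fun _ hz => hz.1⟩

variable [DecidableEq V] {K M : Finset V} {c x : V}

theorem IsAcyclic.exists_vertexBoundary_compIn_erase_subset (hT : T.IsAcyclic)
    (hK : T.ConnectedIn K) (hc : c ∈ K) (hKM : T.vertexBoundary K ⊆ M) (hx : x ∈ K.erase c) :
    ∃ z ∈ T.compIn (K.erase c) x,
      T.vertexBoundary (T.compIn (K.erase c) x) ⊆ ↑(insert z (M ∩ T.compIn (K.erase c) x)) := by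
  obtain ⟨z, hz, hzc⟩ := exists_adj_mem_compIn_erase hK hc hx
  refine ⟨z, hz, fun w ⟨hw, y, hy, hwy⟩ => ?_⟩
  rcases eq_or_notMem_of_adj_compIn_erase hw hy hwy with rfl | hyK
  · have hwz := hT.eq_of_adj_of_reachableIn (notMem_erase y K)
      ((mem_compIn.1 hw).symm.trans (mem_compIn.1 hz)) hwy hzc
    simp [hwz]
  · have hwM : w ∈ M := hKM ⟨mem_of_mem_erase (compIn_subset hw), y, hyK, hwy⟩
    exact mem_coe.2 (mem_insert_of_mem (mem_inter.2 ⟨hwM, hw⟩))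

theorem isPiece_insert_biUnion (hK : T.ConnectedIn K) (hc : c ∈ K)
    (hKM : T.vertexBoundary K ⊆ M) {m : ℕ} {𝒟 : Finset (Finset V)}
    (h𝒟 : ∀ D ∈ 𝒟, D ∈ T.compsIn (K.erase c) ∧ ¬(M ∩ D).Nonempty)
    (hm : ∑ D ∈ 𝒟, D.card < m) : T.IsPiece m (insert c (𝒟.biUnion id)) := by
  set P := insert c (𝒟.biUnion id)
  have hDP : ∀ D ∈ 𝒟, D ⊆ P := fun D hD => (subset_biUnion_of_mem id hD).trans (subset_insert _ _)
  refine ⟨⟨c, mem_insert_self _ _⟩, .of_forall_reachableIn (c := c) fun y hy => ?_, ?_,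
    {c}, card_singleton c |>.le.trans (by norm_num), ?_⟩
  · rcases mem_insert.1 hy with rfl | hy
    · exact .refl (mem_insert_self _ _)
    obtain ⟨D, hD, hyD⟩ := mem_biUnion.1 hy
    obtain ⟨x, hx, rfl⟩ := mem_image.1 (h𝒟 _ hD).1
    obtain ⟨z, hz, hzc⟩ := exists_adj_mem_compIn_erase hK hc hx
    exact ((connectedIn_compIn y hyD z hz).mono (hDP _ hD)).trans
      (.of_adj (hDP _ hD hz) (mem_insert_self _ _) hzc)
  · calc P.card ≤ (𝒟.biUnion id).card + 1 := card_insert_le _ _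
      _ ≤ ∑ D ∈ 𝒟, D.card + 1 := by gcongr; exact card_biUnion_le
      _ ≤ m := hm
  · rintro w ⟨hw, y, hy, hwy⟩
    rcases mem_insert.1 hw with rfl | hw
    · exact mem_coe.2 (mem_singleton_self _)
    exfalso
    obtain ⟨D, hD, hwD⟩ := mem_biUnion.1 hw
    obtain ⟨x, -, rfl⟩ := mem_image.1 (h𝒟 _ hD).1
    rcases eq_or_notMem_of_adj_compIn_erase hwD (fun h => hy (hDP _ hD h)) hwy with rfl | hyK
    · exact hy (mem_insert_self _ _)
    · have hwM : w ∈ M := hKM ⟨mem_of_mem_erase (compIn_subset hwD), y, hyK, hwy⟩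
      exact (h𝒟 _ hD).2 ⟨w, mem_inter.2 ⟨hwM, hwD⟩⟩

/-- `z` is the neighbour of `c` in `C`. -/
theorem IsAcyclic.exists_mem_forall_compsIn_erase_subset (hT : T.IsAcyclic)
    (hK : T.ConnectedIn K) (hc : c ∈ K) {C : Finset V} (hC : C ∈ T.compsIn (K.erase c)) :
    ∃ z ∈ C, ∀ D ∈ T.compsIn (K.erase z), D ⊆ C.erase z ∨ D ⊆ K \ C := by
  obtain ⟨x, hx, rfl⟩ := mem_image.1 hC
  obtain ⟨z, hzC, hzc⟩ := exists_adj_mem_compIn_erase hK hc hx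
  have hclosed : ∀ a ∈ (T.compIn (K.erase c) x).erase z, ∀ b ∈ K.erase z, T.Adj a b →
      b ∈ (T.compIn (K.erase c) x).erase z := by
    intro a ha b hb hab
    have hbc : b ≠ c := by
      rintro rfl
      exact ne_of_mem_erase ha (hT.eq_of_adj_of_reachableIn (notMem_erase b K)
        ((mem_compIn.1 (mem_of_mem_erase ha)).symm.trans (mem_compIn.1 hzC)) hab hzc)
    exact mem_erase.2 ⟨ne_of_mem_erase hb, adj_mem_compIn (mem_of_mem_erase ha)
      (mem_erase.2 ⟨hbc, mem_of_mem_erase hb⟩) hab⟩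
  refine ⟨z, hzC, fun D hD => ?_⟩
  obtain ⟨y, hy, rfl⟩ := mem_image.1 hD
  by_cases hyC : y ∈ T.compIn (K.erase c) x
  · exact .inl (compIn_subset_of_closed hclosed (mem_erase.2 ⟨ne_of_mem_erase hy, hyC⟩))
  refine .inr fun w hw => mem_sdiff.2 ⟨mem_of_mem_erase (compIn_subset hw), fun hwC => hyC ?_⟩
  have hw' : w ∈ (T.compIn (K.erase c) x).erase z :=
    mem_erase.2 ⟨ne_of_mem_erase (compIn_subset hw), hwC⟩
  exact mem_of_mem_erase
    (compIn_subset_of_closed hclosed hw' (mem_compIn.2 (mem_compIn.1 hw).symm))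

def Separates (T : SimpleGraph V) (K M : Finset V) (c : V) : Prop :=
  ∀ D ∈ T.compsIn (K.erase c), (M ∩ D).card ≤ 1

theorem separates_of_mem (hM2 : M.card ≤ 2) (hc : c ∈ M) : T.Separates K M c := fun D hD => by
  have hsub : M ∩ D ⊆ M.erase c := fun b hb =>
    mem_erase.2 ⟨ne_of_mem_erase (subset_of_mem_compsIn hD (mem_inter.1 hb).2), (mem_inter.1 hb).1⟩
  have := card_le_card hsub
  rw [card_erase_of_mem hc] at this
  omega

theorem IsAcyclic.exists_separates_card_lt (hT : T.IsAcyclic) (hK : T.ConnectedIn K) (hcK : c ∈ K)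
    (hM2 : M.card ≤ 2) (hc : T.Separates K M c) {C : Finset V} (hC : C ∈ T.compsIn (K.erase c))
    (hCM : M.card ≤ 1 ∨ (M ∩ C).Nonempty) (hCK : K.card < 2 * C.card) :
    ∃ z ∈ K, T.Separates K M z ∧ ∀ D ∈ T.compsIn (K.erase z), D.card < C.card := by
  have hCK' : C ⊆ K := (subset_of_mem_compsIn hC).trans (erase_subset _ _)
  obtain ⟨z, hzC, hsplit⟩ := hT.exists_mem_forall_compsIn_erase_subset hK hcK hC
  refine ⟨z, hCK' hzC, fun D hD => ?_, fun D hD => ?_⟩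
  · rcases hsplit D hD with h | h
    · exact (card_le_card (inter_subset_inter_left (h.trans (erase_subset _ _)))).trans (hc C hC)
    · have hMC : (M \ C).card ≤ 1 := by
        have := card_sdiff_add_card_inter M C
        rcases hCM with h1 | h1
        · omega
        · have := h1.card_pos
          omega
      exact (card_le_card fun b hb => mem_sdiff.2 ⟨(mem_inter.1 hb).1,
        (mem_sdiff.1 (h (mem_inter.1 hb).2)).2⟩).trans hMC
  · rcases hsplit D hD with h | h
    · have := card_le_card h
      rw [card_erase_of_mem hzC] at this
      omega
    · have := card_le_card h
      rw [card_sdiff_of_subset hCK'] at this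
      omega

theorem IsAcyclic.exists_balanced_separator (hT : T.IsAcyclic) (hK : T.ConnectedIn K)
    (hMK : M ⊆ K) (hM : M.Nonempty) (hM2 : M.card ≤ 2) :
    ∃ c ∈ K, T.Separates K M c ∧
      ∀ D ∈ T.compsIn (K.erase c), M.card ≤ 1 ∨ (M ∩ D).Nonempty → 2 * D.card ≤ K.card := by
  classical
  -- the size of the largest component of `K - c` that has to shrink; a separating `c`
  -- minimising it works
  let g (c : V) : ℕ :=
    ((T.compsIn (K.erase c)).filter fun D => M.card ≤ 1 ∨ (M ∩ D).Nonempty).sup card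
  obtain ⟨a, ha⟩ := hM
  obtain ⟨c, hc, hmin⟩ := exists_min_image (K.filter (T.Separates K M)) g
    ⟨a, mem_filter.2 ⟨hMK ha, separates_of_mem hM2 ha⟩⟩
  obtain ⟨hcK, hc_sep⟩ := mem_filter.1 hc
  refine ⟨c, hcK, hc_sep, fun D hD hDM => ?_⟩
  by_contra! hbig
  have hD' : D ∈ (T.compsIn (K.erase c)).filter fun D => M.card ≤ 1 ∨ (M ∩ D).Nonempty :=
    mem_filter.2 ⟨hD, hDM⟩
  obtain ⟨C, hC, hgC⟩ := exists_mem_eq_sup _ ⟨D, hD'⟩ card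
  have hDC : D.card ≤ C.card := hgC ▸ le_sup (f := card) hD'
  obtain ⟨z, hzK, hz_sep, hlt⟩ := hT.exists_separates_card_lt hK hcK hM2 hc_sep (mem_filter.1 hC).1
    (mem_filter.1 hC).2 (by omega)
  have hgz : g z < g c := by
    rw [show g c = C.card from hgC, Finset.sup_lt_iff (by rw [Nat.bot_eq_zero]; omega)]
    exact fun D' hD' => hlt D' (mem_filter.1 hD').1
  exact (hmin z (mem_filter.2 ⟨hzK, hz_sep⟩)).not_gt hgz

end Pieces

end SimpleGraph

/-- `k` is the size of a connected set, `μ` the number of its attachment vertices; sets with at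
most `m` vertices need no further splitting. -/
def halvingPotential (m k μ : ℕ) : ℕ :=
  if k ≤ m then 0 else 2 * Nat.log 2 (k / m) + μ

theorem halvingPotential_pos {m k μ : ℕ} (hk : m < k) (hμ : 0 < μ) :
    0 < halvingPotential m k μ := by
  rw [halvingPotential, if_neg hk.not_ge]
  omega

theorem halvingPotential_lt_of_two_mul_le {m k d μ μ' : ℕ} (hm : 0 < m) (hk : m < k)
    (hd : 2 * d ≤ k) (hμ : 0 < μ) (hμ' : μ' ≤ 2) :
    halvingPotential m d μ' < halvingPotential m k μ := by
  rw [halvingPotential, halvingPotential, if_neg hk.not_ge]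
  split_ifs with hdm
  · omega
  have hdk : d / m ≤ k / m / 2 := by
    rw [Nat.div_div_eq_div_mul, mul_comm, ← Nat.div_div_eq_div_mul]
    exact Nat.div_le_div_right ((Nat.le_div_iff_mul_le two_pos).2 (by omega))
  have hlog : Nat.log 2 (d / m) ≤ Nat.log 2 (k / m) - 1 :=
    Nat.log_div_base 2 (k / m) ▸ Nat.log_mono_right hdk
  have hpos : 0 < Nat.log 2 (k / m) :=
    Nat.log_pos one_lt_two ((Nat.le_div_iff_mul_le hm).2 (by omega))
  omega

theorem halvingPotential_one_lt_two {m k d : ℕ} (hk : m < k) (hd : d ≤ k) :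
    halvingPotential m d 1 < halvingPotential m k 2 := by
  rw [halvingPotential, halvingPotential, if_neg hk.not_ge]
  split_ifs
  · omega
  have := Nat.log_mono_right (b := 2) (Nat.div_le_div_right (c := m) hd)
  omega

theorem halvingPotential_le {m k μ b : ℕ} (h : k / m ≤ b) :
    halvingPotential m k μ ≤ 2 * Nat.log 2 b + μ := by
  rw [halvingPotential]
  split_ifs
  · omega
  · have := Nat.log_mono_right (b := 2) h
    omega

theorem List.exists_flatten_eq_sum_le {α : Type*} (w : α → ℕ) (a : ℕ) (l : List α)
    (hl : ∀ x ∈ l, w x ≤ a) :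
    ∃ gs : List (List α), gs.flatten = l ∧ (∀ g ∈ gs, (g.map w).sum ≤ 2 * a) ∧
      a * gs.length ≤ (l.map w).sum + a := by
  have key : ∃ gs : List (List α), gs.flatten = l ∧ (∀ g ∈ gs, (g.map w).sum ≤ 2 * a) ∧
      ∀ g ∈ gs.tail, a ≤ (g.map w).sum := by
    induction l with
    | nil => exact ⟨[], rfl, by simp, by simp⟩
    | cons x l ih =>
      obtain ⟨gs, hflat, hle, hge⟩ := ih fun y hy => hl y (mem_cons_of_mem x hy)
      have hx := hl x mem_cons_self
      rcases gs with _ | ⟨g, gs⟩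
      · exact ⟨[[x]], by simp [← hflat], by simp; omega, by simp⟩
      by_cases hg : (g.map w).sum < a
      · refine ⟨(x :: g) :: gs, by simp [← hflat], ?_, hge⟩
        simp only [mem_cons, forall_eq_or_imp, map_cons, sum_cons]
        exact ⟨by omega, fun g' hg' => hle g' (mem_cons_of_mem g hg')⟩
      · refine ⟨[x] :: g :: gs, by simp [← hflat], ?_, ?_⟩
        · simp only [mem_cons, forall_eq_or_imp, map_cons, map_nil, sum_cons, sum_nil]
          exact ⟨by omega, hle g mem_cons_self, fun g' hg' => hle g' (mem_cons_of_mem g hg')⟩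
        · simp only [tail_cons, mem_cons, forall_eq_or_imp]
          exact ⟨by omega, hge⟩
  obtain ⟨gs, hflat, hle, hge⟩ := key
  refine ⟨gs, hflat, hle, ?_⟩
  have hsum : ((gs.map fun g => (g.map w).sum)).sum = (l.map w).sum := by
    rw [← hflat, map_flatten, sum_flatten, map_map]
    rfl
  rcases gs with _ | ⟨g, gs⟩
  · simp
  have := card_nsmul_le_sum (gs.map fun g => (g.map w).sum) a (by simpa using hge)
  simp only [length_cons, map_cons, sum_cons, length_map, smul_eq_mul] at this hsum ⊢
  rw [mul_add, mul_one, mul_comm]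
  omega

namespace SimpleGraph

section Cover

variable {V : Type*} {T : SimpleGraph V} [DecidableEq V] {K M : Finset V} {c : V} {m m' : ℕ}

def HasPieceCover (T : SimpleGraph V) (m N : ℕ) (K : Finset V) : Prop :=
  ∃ 𝒞 : Finset (Finset V), 𝒞.card ≤ N ∧ (∀ P ∈ 𝒞, T.IsPiece m P) ∧ K ⊆ 𝒞.biUnion id

theorem HasPieceCover.mono {N N' : ℕ} (h : T.HasPieceCover m N K) (hN : N ≤ N') :
    T.HasPieceCover m N' K :=
  h.elim fun 𝒞 h𝒞 => ⟨𝒞, h𝒞.1.trans hN, h𝒞.2⟩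

theorem card_compsIn_filter_meet_or_lt_le (hm' : 0 < m') {W : Finset V} :
    ((T.compsIn W).filter fun D => (M ∩ D).Nonempty ∨ m' < D.card).card ≤
      M.card + W.card / m' := by
  rw [filter_or]
  refine (card_union_le _ _).trans (add_le_add card_compsIn_filter_meet_le ?_)
  rw [Nat.le_div_iff_mul_le hm', mul_comm]
  exact mul_card_compsIn_filter_lt_le m'

theorem exists_bundle_cover (hK : T.ConnectedIn K) (hc : c ∈ K) (hKM : T.vertexBoundary K ⊆ M)
    (hm : 2 * m' < m) :
    ∃ 𝒬 : Finset (Finset V), m' * 𝒬.card ≤ K.card + m' ∧ (∀ P ∈ 𝒬, T.IsPiece m P) ∧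
      ∀ D ∈ T.compsIn (K.erase c), ¬((M ∩ D).Nonempty ∨ m' < D.card) → D ⊆ 𝒬.biUnion id := by
  classical
  set S := (T.compsIn (K.erase c)).filter fun D => ¬((M ∩ D).Nonempty ∨ m' < D.card)
  obtain ⟨gs, hflat, hgs, hlen⟩ := List.exists_flatten_eq_sum_le card m' S.toList fun D hD =>
    not_lt.1 (not_or.1 (mem_filter.1 (mem_toList.1 hD)).2).2
  have hgS : ∀ g ∈ gs, ∀ D ∈ g, D ∈ S := fun g hg D hD =>
    mem_toList.1 (hflat ▸ List.mem_flatten.2 ⟨g, hg, hD⟩)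
  refine ⟨gs.toFinset.image fun g => insert c (g.toFinset.biUnion id), ?_, ?_, ?_⟩
  · have hS : (S.toList.map card).sum ≤ K.card := by
      rw [sum_map_toList]
      exact (sum_le_sum_of_subset (filter_subset _ _)).trans
        (sum_card_compsIn.trans_le (card_le_card (erase_subset _ _)))
    have hcard : (gs.toFinset.image fun g => insert c (g.toFinset.biUnion id)).card ≤ gs.length :=
      card_image_le.trans (List.toFinset_card_le gs)
    calc m' * _ ≤ m' * gs.length := Nat.mul_le_mul_left _ hcard
      _ ≤ K.card + m' := by omega
  · simp only [mem_image, List.mem_toFinset]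
    rintro _ ⟨g, hg, rfl⟩
    refine isPiece_insert_biUnion hK hc hKM (fun D hD => ?_) ?_
    · have := mem_filter.1 (hgS g hg D (List.mem_toFinset.1 hD))
      exact ⟨this.1, (not_or.1 this.2).1⟩
    · have hnodup : g.Nodup := (List.sublist_flatten_of_mem hg).nodup (hflat ▸ nodup_toList S)
      rw [List.sum_toFinset _ hnodup]
      exact (hgs g hg).trans_lt hm
  · intro D hD hsmall
    obtain ⟨g, hg, hDg⟩ := List.mem_flatten.1 (hflat ▸ mem_toList.2 (mem_filter.2 ⟨hD, hsmall⟩))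
    refine fun x hx => mem_biUnion.2 ⟨_, mem_image.2 ⟨g, List.mem_toFinset.2 hg, rfl⟩, ?_⟩
    exact mem_insert_of_mem (mem_biUnion.2 ⟨D, List.mem_toFinset.2 hDg, hx⟩)

/-- One level of the recursion: `K` is covered by `{c}`, the bundles of the small components of
`K - c` avoiding `M`, and covers of the other components. -/
theorem hasPieceCover_of_separator (hK : T.ConnectedIn K) (hc : c ∈ K)
    (hKM : T.vertexBoundary K ⊆ M) (hM2 : M.card ≤ 2) (hm' : 0 < m') (hm : 2 * m' < m) {B e : ℕ}
    (hB : K.card / m' * 2 + 4 ≤ B)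
    (hrec : ∀ D ∈ T.compsIn (K.erase c), (M ∩ D).Nonempty ∨ m' < D.card →
      T.HasPieceCover m (B ^ e) D) :
    T.HasPieceCover m (B ^ (e + 1)) K := by
  classical
  set R := (T.compsIn (K.erase c)).filter fun D => (M ∩ D).Nonempty ∨ m' < D.card
  choose! 𝒞 h𝒞 using fun D (hD : D ∈ R) => hrec D (mem_filter.1 hD).1 (mem_filter.1 hD).2
  obtain ⟨𝒬, h𝒬card, h𝒬, h𝒬cover⟩ := exists_bundle_cover hK hc hKM hm
  refine ⟨{{c}} ∪ 𝒬 ∪ R.biUnion 𝒞, ?_, ?_, fun x hx => ?_⟩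
  · have hR : R.card ≤ 2 + K.card / m' := (card_compsIn_filter_meet_or_lt_le hm').trans
      (add_le_add hM2 (Nat.div_le_div_right (card_le_card (erase_subset _ _))))
    have hQ : 𝒬.card ≤ K.card / m' + 1 := by
      rw [← Nat.add_div_right _ hm', Nat.le_div_iff_mul_le hm', mul_comm]
      exact h𝒬card
    have hpow : 1 ≤ B ^ e := Nat.one_le_pow _ _ (by omega)
    have hRC : (R.biUnion 𝒞).card ≤ R.card * B ^ e := card_biUnion_le.trans
      (by simpa using sum_le_card_nsmul R _ _ fun D hD => (h𝒞 D hD).1)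
    calc _ ≤ ({{c}} ∪ 𝒬).card + (R.biUnion 𝒞).card := card_union_le _ _
      _ ≤ 1 + 𝒬.card + R.card * B ^ e := add_le_add (card_union_le _ _) hRC
      _ ≤ (1 + 𝒬.card + R.card) * B ^ e := by nlinarith
      _ ≤ B * B ^ e := Nat.mul_le_mul_right _ (by omega)
      _ = B ^ (e + 1) := (pow_succ' B e).symm
  · simp only [mem_union, mem_singleton, mem_biUnion]
    rintro P ((rfl | hP) | ⟨D, hD, hP⟩)
    exacts [isPiece_singleton (by omega) c, h𝒬 P hP, (h𝒞 D hD).2.1 P hP]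
  by_cases hxc : x = c
  · exact mem_biUnion.2 ⟨{c}, by simp, by simp [hxc]⟩
  have hx' : x ∈ K.erase c := mem_erase.2 ⟨hxc, hx⟩
  have hD : T.compIn (K.erase c) x ∈ T.compsIn (K.erase c) := mem_image_of_mem _ hx'
  by_cases hrec : (M ∩ T.compIn (K.erase c) x).Nonempty ∨ m' < (T.compIn (K.erase c) x).card
  · have hDR : T.compIn (K.erase c) x ∈ R := mem_filter.2 ⟨hD, hrec⟩
    obtain ⟨P, hP, hxP⟩ := mem_biUnion.1 ((h𝒞 _ hDR).2.2 (mem_compIn_self hx'))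
    exact mem_biUnion.2 ⟨P, mem_union_right _ (mem_biUnion.2 ⟨_, hDR, hP⟩), hxP⟩
  · obtain ⟨P, hP, hxP⟩ := mem_biUnion.1 (h𝒬cover _ hD hrec (mem_compIn_self hx'))
    exact mem_biUnion.2 ⟨P, mem_union_left _ (mem_union_right _ hP), hxP⟩

/-- Each recursion step either halves the component or reduces the number of its attachment
vertices from two to one, so `halvingPotential` bounds the depth of the recursion. -/
theorem IsAcyclic.hasPieceCover [Fintype V] (hT : T.IsAcyclic) (hm' : 0 < m') (hm : 2 * m' < m)
    {B : ℕ} (hB : Fintype.card V / m' * 2 + 4 ≤ B) (hK : T.ConnectedIn K) (hMK : M ⊆ K)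
    (hM : M.Nonempty) (hM2 : M.card ≤ 2) (hKM : T.vertexBoundary K ⊆ M) :
    T.HasPieceCover m (B ^ halvingPotential m K.card M.card) K := by
  induction hk : K.card using Nat.strong_induction_on generalizing K M with
  | _ k ih =>
  by_cases hkm : k ≤ m
  · exact ⟨{K}, (card_singleton K).trans_le (Nat.one_le_pow _ _ (by omega)),
      by simpa using ⟨hM.mono hMK, hK, hk ▸ hkm, M, hM2, hKM⟩, by simp⟩
  obtain ⟨c, hcK, hsep, hhalf⟩ := hT.exists_balanced_separator hK hMK hM hM2
  obtain ⟨e, he⟩ := Nat.exists_eq_add_one_of_ne_zero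
    (halvingPotential_pos (m := m) (k := k) (by omega) hM.card_pos).ne'
  rw [he]
  refine hasPieceCover_of_separator hK hcK hKM hM2 hm' hm
    (by have := Nat.div_le_div_right (c := m') (card_le_univ K); omega) fun D hD _ => ?_
  obtain ⟨x, hx, rfl⟩ := mem_image.1 hD
  obtain ⟨z, hz, hbd⟩ := hT.exists_vertexBoundary_compIn_erase_subset hK hcK hKM hx
  set D := T.compIn (K.erase c) x
  have hM'2 : (insert z (M ∩ D)).card ≤ 2 :=
    (card_insert_le _ _).trans (by have := hsep D hD; omega)
  have hDK : D.card < k := hk ▸ (card_lt_card ((subset_of_mem_compsIn hD).trans_ssubset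
    (erase_ssubset hcK)))
  have hdrop : halvingPotential m D.card (insert z (M ∩ D)).card < e + 1 := by
    rw [← he]
    by_cases hrel : M.card ≤ 1 ∨ (M ∩ D).Nonempty
    · exact halvingPotential_lt_of_two_mul_le (by omega) (by omega) (hk ▸ hhalf D hD hrel)
        hM.card_pos hM'2
    · obtain ⟨hM1, hMD⟩ := not_or.1 hrel
      rw [not_nonempty_iff_eq_empty.1 hMD, show M.card = 2 by omega, insert_empty,
        card_singleton]
      exact halvingPotential_one_lt_two (by omega) hDK.le
  exact (ih _ hDK connectedIn_compIn (insert_subset hz inter_subset_right)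
    (insert_nonempty _ _) hM'2 hbd rfl).mono
    (Nat.pow_le_pow_right (by omega) (Nat.lt_succ_iff.1 hdrop))

theorem HasPieceCover.exists_isPiece_card_le_mul {N : ℕ} (h : T.HasPieceCover m N K)
    (hK : K.Nonempty) {L : Finset V} (hLK : L ⊆ K) :
    ∃ P, T.IsPiece m P ∧ L.card ≤ N * (P ∩ L).card := by
  obtain ⟨𝒞, hN, h𝒞, hK𝒞⟩ := h
  have hne : 𝒞.Nonempty := by
    obtain ⟨x, hx⟩ := hK
    obtain ⟨P, hP, -⟩ := mem_biUnion.1 (hK𝒞 hx)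
    exact ⟨P, hP⟩
  obtain ⟨P, hP, hmax⟩ := exists_max_image 𝒞 (fun P => (P ∩ L).card) hne
  refine ⟨P, h𝒞 P hP, ?_⟩
  calc L.card ≤ (𝒞.biUnion (· ∩ L)).card := card_le_card fun x hx => by
        obtain ⟨Q, hQ, hxQ⟩ := mem_biUnion.1 (hK𝒞 (hLK hx))
        exact mem_biUnion.2 ⟨Q, hQ, mem_inter.2 ⟨hxQ, hx⟩⟩
    _ ≤ ∑ Q ∈ 𝒞, (Q ∩ L).card := card_biUnion_le
    _ ≤ 𝒞.card * (P ∩ L).card := by simpa using sum_le_card_nsmul 𝒞 _ _ hmax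
    _ ≤ N * (P ∩ L).card := Nat.mul_le_mul_right _ hN

end Cover

section Split

variable {V : Type*} [DecidableEq V] {T : SimpleGraph V}

theorem IsPiece.exists_superset [Nontrivial V] (hT : T.Connected) {m : ℕ} (hm : 2 ≤ m)
    {P : Finset V} (hP : T.IsPiece m P) :
    ∃ S u v, P ⊆ S ∧ T.ConnectedIn S ∧ S.card ≤ m ∧ u ∈ S ∧ v ∈ S ∧ u ≠ v ∧
      T.vertexBoundary S ⊆ {u, v} := by
  obtain ⟨⟨x, hx⟩, hPconn, hPm, A, hA, hPA⟩ := hP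
  by_cases hP2 : 2 ≤ P.card
  · obtain ⟨B, hAB, hBP, hB⟩ := exists_subsuperset_card_eq (inter_subset_right : A ∩ P ⊆ P)
      ((card_le_card inter_subset_left).trans hA) hP2
    obtain ⟨u, v, huv, rfl⟩ := card_eq_two.1 hB
    refine ⟨P, u, v, subset_rfl, hPconn, hPm, hBP (by simp), hBP (by simp), huv, fun z hz => ?_⟩
    simpa using hAB (mem_inter.2 ⟨hPA hz, hz.1⟩)
  · have hPx : P = {x} :=
      eq_singleton_iff_unique_mem.2 ⟨hx, fun y hy => card_le_one.1 (by omega) y hy x hx⟩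
    obtain ⟨y, hxy⟩ := hT.preconnected.exists_adj_of_nontrivial x
    exact ⟨{x, y}, x, y, by simp [hPx], connectedIn_pair hxy, card_le_two.trans hm, by simp,
      by simp, hxy.ne, fun z hz => by simpa using hz.1⟩

/-- The part of the tree outside `S` that does not hang off `S` at `u`, together with `v`. -/
theorem Connected.connectedIn_insert_sdiff_compIn [Fintype V] (hT : T.Connected) {S : Finset V}
    {u v : V} (hv : v ∈ S) (hS : T.vertexBoundary S ⊆ {u, v}) :
    T.ConnectedIn (insert v ((univ \ S) \ T.compIn (insert u (univ \ S)) u)) := by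
  set T₁ := T.compIn (insert u (univ \ S)) u
  have hout : ∀ {y a}, y ∉ T₁ → T.ReachableIn (univ \ S) y a →
      T.ReachableIn (insert v ((univ \ S) \ T₁)) y a := by
    rintro y a hy ⟨p, hp⟩
    refine ⟨p, fun w hw => mem_insert_of_mem (mem_sdiff.2 ⟨hp w hw, fun hwT₁ => hy ?_⟩)⟩
    exact mem_compIn.2 ((mem_compIn.1 hwT₁).trans
      ((ReachableIn.of_mem_support p hp hw).symm.mono (subset_insert _ _)))
  refine .of_forall_reachableIn (c := v) fun y hy => ?_
  rcases mem_insert.1 hy with rfl | hy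
  · exact .refl (mem_insert_self _ _)
  obtain ⟨hyS, hyT₁⟩ := mem_sdiff.1 hy
  obtain ⟨a, haS, s, hs, has, hya⟩ :=
    (hT.connectedIn_univ y (mem_univ y) v (mem_univ v)).exists_adj_first_mem (mem_sdiff.1 hyS).2 hv
  have haT₂ := (hout hyT₁ hya).mem_right
  rcases hS ⟨(mem_inter.1 hs).2, a, haS, has.symm⟩ with rfl | rfl
  · refine absurd (adj_mem_compIn (mem_compIn_self (mem_insert_self _ _))
      (mem_insert_of_mem (mem_sdiff.2 ⟨mem_univ a, haS⟩)) has.symm) fun haT₁ => ?_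
    rcases mem_insert.1 haT₂ with rfl | ha
    exacts [haS hv, (mem_sdiff.1 ha).2 haT₁]
  · exact (hout hyT₁ hya).trans (.of_adj haT₂ (mem_insert_self _ _) has)

theorem Connected.exists_split [Fintype V] (hT : T.Connected) {S : Finset V} {u v : V}
    (hu : u ∈ S) (hv : v ∈ S) (huv : u ≠ v) (hS : T.vertexBoundary S ⊆ {u, v}) :
    ∃ T₁ T₂ : Finset V, IsSubtree T T₁ ∧ IsSubtree T T₂ ∧ S ∪ T₁ ∪ T₂ = univ ∧
      Disjoint T₁ T₂ ∧ T₁ ∩ S = {u} ∧ T₂ ∩ S = {v} := by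
  set T₁ := T.compIn (insert u (univ \ S)) u
  have huT₁ : u ∈ T₁ := mem_compIn_self (mem_insert_self _ _)
  have hT₁S : T₁ ∩ S = {u} := by
    refine eq_singleton_iff_unique_mem.2 ⟨mem_inter.2 ⟨huT₁, hu⟩, fun w hw => ?_⟩
    rcases mem_insert.1 (compIn_subset (mem_inter.1 hw).1) with h | h
    exacts [h, absurd (mem_inter.1 hw).2 (mem_sdiff.1 h).2]
  have hvT₁ : v ∉ T₁ := fun h => huv (mem_singleton.1 (hT₁S ▸ mem_inter.2 ⟨h, hv⟩)).symm
  refine ⟨T₁, insert v ((univ \ S) \ T₁), connectedIn_compIn.isSubtree ⟨u, huT₁⟩,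
    (hT.connectedIn_insert_sdiff_compIn hv hS).isSubtree (insert_nonempty _ _), ?_,
    disjoint_insert_right.2 ⟨hvT₁, disjoint_sdiff⟩, hT₁S, ?_⟩
  · ext w
    by_cases hwS : w ∈ S
    · simp [hwS]
    · by_cases hwT₁ : w ∈ T₁ <;> simp [hwS, hwT₁]
  · refine eq_singleton_iff_unique_mem.2 ⟨mem_inter.2 ⟨mem_insert_self _ _, hv⟩, fun w hw => ?_⟩
    rcases mem_insert.1 (mem_inter.1 hw).1 with h | h
    exacts [h, absurd (mem_inter.1 hw).2 (mem_sdiff.1 (mem_sdiff.1 h).1).2]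

theorem IsTree.exists_split [Fintype V] [Nontrivial V] (hT : T.IsTree) {m m' B : ℕ}
    (hm' : 0 < m') (hm : 2 * m' < m) (hB : Fintype.card V / m' * 2 + 4 ≤ B) (L : Finset V) :
    ∃ S T₁ T₂ : Finset V, IsSubtree T S ∧ IsSubtree T T₁ ∧ IsSubtree T T₂ ∧
      S ∪ T₁ ∪ T₂ = univ ∧ S.card ≤ m ∧
      L.card ≤ B ^ halvingPotential m (Fintype.card V) 1 * (S ∩ L).card ∧
      Disjoint T₁ T₂ ∧ (T₁ ∩ S).card = 1 ∧ (T₂ ∩ S).card = 1 := by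
  obtain ⟨r⟩ := (inferInstance : Nonempty V)
  have hcover := hT.isAcyclic.hasPieceCover hm' hm hB hT.connected.connectedIn_univ
    (subset_univ {r}) (singleton_nonempty r) (by simp) fun _ ⟨_, y, hy, _⟩ => absurd (mem_univ y) hy
  rw [card_univ, card_singleton] at hcover
  obtain ⟨P, hP, hL⟩ := hcover.exists_isPiece_card_le_mul univ_nonempty (subset_univ L)
  obtain ⟨S, u, v, hPS, hS, hSm, hu, hv, huv, hSuv⟩ := hP.exists_superset hT.connected (by omega)
  obtain ⟨T₁, T₂, h₁, h₂, hcov, hdisj, h₁S, h₂S⟩ := hT.connected.exists_split hu hv huv hSuv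
  exact ⟨S, T₁, T₂, hS.isSubtree ⟨u, hu⟩, h₁, h₂, hcov, hSm,
    hL.trans (Nat.mul_le_mul_left _ (card_le_card (inter_subset_inter_right hPS))), hdisj,
    by simp [h₁S], by simp [h₂S]⟩

end Split

end SimpleGraph

theorem Nat.div_div_lt_two_mul {n q : ℕ} (hq : 0 < q) (hn : q ≤ n) : n / (n / q) < 2 * q := by
  have hnq : 0 < n / q := Nat.div_pos hn hq
  have := Nat.lt_mul_div_succ n hq
  rw [Nat.div_lt_iff_lt_mul hnq]
  nlinarith

/-- For any `ε > 0` there are `β > 0` and `n₀` such that any tree `T` on `n ≥ n₀` vertices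
and any `L ⊆ V(T)` admit subtrees `S, T₁, T₂` covering `T` with `|S| ≤ εn`, `S` containing
at least `β|L|` vertices of `L`, and `T₁, T₂` disjoint, each meeting `S` in one vertex. -/
theorem stmt10 (ε : ℝ) (hε : 0 < ε) :
    ∃ (β : ℝ) (n₀ : ℕ), 0 < β ∧
      ∀ n : ℕ, n₀ ≤ n → ∀ T : SimpleGraph (Fin n), T.IsTree → ∀ L : Finset (Fin n),
        ∃ S T₁ T₂ : Finset (Fin n),
          IsSubtree T S ∧ IsSubtree T T₁ ∧ IsSubtree T T₂ ∧
          S ∪ T₁ ∪ T₂ = Finset.univ ∧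
          (S.card : ℝ) ≤ ε * n ∧
          β * L.card ≤ ((S ∩ L).card : ℝ) ∧
          Disjoint T₁ T₂ ∧ (T₁ ∩ S).card = 1 ∧ (T₂ ∩ S).card = 1 := by
  obtain ⟨q, hq, hεq⟩ : ∃ q : ℕ, 0 < q ∧ 3 ≤ ε * q := ⟨⌈3 / ε⌉₊, Nat.ceil_pos.2 (by positivity),
    by have := Nat.le_ceil (3 / ε); rwa [div_le_iff₀ hε, mul_comm] at this⟩
  -- pieces have at most `2m' + 1 ≤ εn` vertices, where `m' = ⌊n / q⌋`; `B` bounds the number of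
  -- parts created at each level of the recursion and `D` its depth
  set B := 4 * q + 4
  set D := 2 * Nat.log 2 (2 * q) + 1
  refine ⟨((B ^ D : ℕ) : ℝ)⁻¹, q + 2, by positivity, fun n hn T hT L => ?_⟩
  have : Nontrivial (Fin n) := Fin.nontrivial_iff_two_le.2 (by omega)
  have hm' : 0 < n / q := Nat.div_pos (by omega) hq
  have hnm' := Nat.div_div_lt_two_mul hq (by omega : q ≤ n)
  obtain ⟨S, T₁, T₂, hS, h₁, h₂, hcov, hSm, hL, hdisj, h₁S, h₂S⟩ :=
    hT.exists_split hm' (Nat.lt_succ_self (2 * (n / q))) (B := B)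
      (by simp only [Fintype.card_fin]; omega) L
  refine ⟨S, T₁, T₂, hS, h₁, h₂, hcov, ?_, ?_, hdisj, h₁S, h₂S⟩
  · calc (S.card : ℝ) ≤ 3 * (n / q : ℕ) := by exact_mod_cast hSm.trans (by omega)
      _ ≤ ε * q * (n / q : ℕ) := by gcongr
      _ ≤ ε * n := by rw [mul_assoc]; gcongr; exact_mod_cast Nat.mul_div_le n q
  · have hpot : halvingPotential (2 * (n / q) + 1) n 1 ≤ D := halvingPotential_le
      ((Nat.div_le_div_left (by omega) hm').trans (by omega))
    rw [inv_mul_le_iff₀ (by positivity)]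
    rw [Fintype.card_fin] at hL
    exact_mod_cast hL.trans (Nat.mul_le_mul_right _ (Nat.pow_le_pow_right (by omega) hpot))
end

section
/- Let d ≥ 1 and m ∈ ℕ. Suppose G is a graph in which every set A ⊆ V(G) with |A| = m satisfies |N(A)| ≥ 2dm + m. Then there is a set B ⊆ V(G) with |B| ≤ m such that the induced subgraph H = G[V(G)\B] satisfies: every nonempty subset A ⊆ V(H) with |A| ≤ m has |N_H(A)| ≥ d|A|. -/
/-- The neighbourhood `N(U)` of a vertex set `U`: all vertices outside `U` with a
neighbour in `U`. -/
def nbr {V : Type*} (G : SimpleGraph V) (U : Finset V) : Set V :=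
  {v | v ∉ U ∧ ∃ u ∈ U, G.Adj u v}

/-!
Take `B` of maximum size among the sets with `|B| ≤ m` and `|N(B)| ≤ d|B|`. If some nonempty
`A` with `|A| ≤ m` outside `B` had `|N(A) ∖ B| < d|A|`, then `S = B ∪ A` would satisfy
`|N(S)| < d|S|`. If `|S| ≤ m` this contradicts the maximality of `B`. Otherwise
`m < |S| ≤ 2m`, and an `m`-subset `C ⊆ S` has `|N(C)| ≤ |N(S)| + |S| - m`, so the expansion
hypothesis forces `|N(S)| ≥ 2dm ≥ d|S|`.
-/

section Neighbourhood

variable {V : Type*} [DecidableEq V] (G : SimpleGraph V)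

theorem nbr_union_subset (B A : Finset V) :
    nbr G (B ∪ A) ⊆ nbr G B ∪ (nbr G A \ ↑B) := by
  rintro v ⟨hv, u, hu, hadj⟩
  simp only [Finset.mem_union, not_or] at hv hu
  rcases hu with huB | huA
  · exact Or.inl ⟨hv.1, u, huB, hadj⟩
  · exact Or.inr ⟨⟨hv.2, u, huA, hadj⟩, hv.1⟩

theorem nbr_subset_union_sdiff {C S : Finset V} (hCS : C ⊆ S) :
    nbr G C ⊆ nbr G S ∪ ↑(S \ C) := by
  rintro v ⟨hv, u, hu, hadj⟩
  by_cases hvS : v ∈ S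
  · exact Or.inr (by simpa using Finset.mem_sdiff.2 ⟨hvS, hv⟩)
  · exact Or.inl ⟨hvS, u, hCS hu, hadj⟩

variable [Finite V]

theorem ncard_nbr_union_le (B A : Finset V) :
    (nbr G (B ∪ A)).ncard ≤ (nbr G B).ncard + (nbr G A \ ↑B).ncard :=
  (Set.ncard_le_ncard (nbr_union_subset G B A)).trans (Set.ncard_union_le _ _)

theorem ncard_nbr_add_card_le {C S : Finset V} (hCS : C ⊆ S) :
    (nbr G C).ncard + C.card ≤ (nbr G S).ncard + S.card := by
  have h := (Set.ncard_le_ncard (nbr_subset_union_sdiff G hCS)).trans (Set.ncard_union_le _ _)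
  rw [Set.ncard_coe_finset, Finset.card_sdiff_of_subset hCS] at h
  have := Finset.card_le_card hCS
  omega

theorem mul_card_le_ncard_nbr {d : ℝ} (hd : 0 ≤ d) {m : ℕ}
    (hexp : ∀ A : Finset V, A.card = m → 2 * d * m + m ≤ ((nbr G A).ncard : ℝ))
    {S : Finset V} (hmS : m ≤ S.card) (hS2m : S.card ≤ 2 * m) :
    d * S.card ≤ (nbr G S).ncard := by
  obtain ⟨C, hCS, hCm⟩ := Finset.exists_subset_card_eq hmS
  have hC : ((nbr G C).ncard : ℝ) + m ≤ (nbr G S).ncard + S.card := by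
    rw [← hCm]; exact_mod_cast ncard_nbr_add_card_le G hCS
  have hS : d * S.card ≤ d * (2 * m) :=
    mul_le_mul_of_nonneg_left (by exact_mod_cast hS2m) hd
  have hS' : (S.card : ℝ) ≤ 2 * m := by exact_mod_cast hS2m
  linarith [hexp C hCm]

end Neighbourhood

/-- If every `m`-set `A` of vertices of `G` satisfies `|N(A)| ≥ 2dm + m`, then there is
`B` with `|B| ≤ m` such that in `H = G[V(G)∖B]` every nonempty `A` with `|A| ≤ m` has
`|N_H(A)| ≥ d|A|`. (For `A ⊆ V(G)∖B`, the neighbourhood of `A` in `H` is `N_G(A)∖B`.) -/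
theorem stmt13 {V : Type*} [Fintype V] (G : SimpleGraph V) (d : ℝ) (hd : 1 ≤ d) (m : ℕ)
    (hexp : ∀ A : Finset V, A.card = m → 2 * d * m + m ≤ ((nbr G A).ncard : ℝ)) :
    ∃ B : Finset V, B.card ≤ m ∧
      ∀ A : Finset V, A.Nonempty → A.card ≤ m → (∀ a ∈ A, a ∉ B) →
        d * A.card ≤ ((nbr G A \ ↑B).ncard : ℝ) := by
  classical
  set F := Finset.univ.filter fun B : Finset V => B.card ≤ m ∧ ((nbr G B).ncard : ℝ) ≤ d * B.card
  have hF (B : Finset V) : B ∈ F ↔ B.card ≤ m ∧ ((nbr G B).ncard : ℝ) ≤ d * B.card := by simp [F]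
  obtain ⟨B, hBF, hBmax⟩ := F.exists_max_image Finset.card ⟨∅, (hF ∅).2 (by simp [nbr])⟩
  obtain ⟨hBm, hBd⟩ := (hF B).1 hBF
  refine ⟨B, hBm, fun A hA hAm hAB => ?_⟩
  by_contra! hbad
  have hcard : (B ∪ A).card = B.card + A.card :=
    Finset.card_union_of_disjoint (Finset.disjoint_right.2 hAB)
  have hS : ((nbr G (B ∪ A)).ncard : ℝ) < d * (B ∪ A).card := by
    have : ((nbr G (B ∪ A)).ncard : ℝ) ≤ (nbr G B).ncard + (nbr G A \ ↑B).ncard := by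
      exact_mod_cast ncard_nbr_union_le G B A
    rw [hcard]; push_cast
    linarith
  have hApos := hA.card_pos
  by_cases hSm : (B ∪ A).card ≤ m
  · have := hBmax _ ((hF _).2 ⟨hSm, hS.le⟩)
    omega
  · have := mul_card_le_ncard_nbr G (by linarith) hexp (S := B ∪ A) (by omega) (by omega)
    linarith
end

section
/- Let n, Δ ∈ ℕ, let d ∈ ℝ with d ≥ 2Δ, and let G be an (n,d)-expander. Then for every tree T ∈ T(n − 4Δ⌈n/(2d)⌉, Δ) and any vertices v ∈ V(G) and t ∈ V(T), there is an embedding of T in G with t embedded on v. -/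
/-- `G` is an `(n,d)`-expander: it has `n` vertices, `|N(X)| ≥ d|X|` for every `X` with
`1 ≤ |X| < ⌈n/2d⌉`, and any two disjoint sets of size `⌈n/2d⌉` have an edge between them. -/
def IsExpander {V : Type*} [Fintype V] (G : SimpleGraph V) (n : ℕ) (d : ℝ) : Prop :=
  Fintype.card V = n ∧
  (∀ X : Finset V, 1 ≤ X.card → X.card < ⌈(n : ℝ) / (2 * d)⌉₊ →
    d * X.card ≤ ((nbr G X).ncard : ℝ)) ∧
  (∀ X Y : Finset V, Disjoint X Y → X.card = ⌈(n : ℝ) / (2 * d)⌉₊ →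
    Y.card = ⌈(n : ℝ) / (2 * d)⌉₊ → ∃ x ∈ X, ∃ y ∈ Y, G.Adj x y)

/-- `G` contains a copy of `T` (an injective graph homomorphism from `T` to `G`). -/
def ContainsCopy {V W : Type*} (T : SimpleGraph V) (G : SimpleGraph W) : Prop :=
  ∃ f : T →g G, Function.Injective f

open Finset

namespace Finset

variable {β : Type*} [DecidableEq β]

lemma card_union_sdiff_add_card_inter_sdiff (U X Y : Finset β) :
    #((X ∪ Y) \ U) + #((X ∩ Y) \ U) = #(X \ U) + #(Y \ U) := by
  rw [union_sdiff_distrib, ← card_union_add_card_inter (X \ U) (Y \ U)]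
  congr 2
  ext
  simp only [mem_sdiff, mem_inter]
  tauto

lemma card_sdiff_insert_add_ite {A U : Finset β} {w : β} (hw : w ∉ U) :
    #(A \ insert w U) + (if w ∈ A then 1 else 0) = #(A \ U) := by
  rw [sdiff_insert]
  split_ifs with hwA
  · exact card_erase_add_one (mem_sdiff.2 ⟨hwA, hw⟩)
  · rw [erase_eq_of_notMem fun h => hwA (mem_sdiff.1 h).1, add_zero]

end Finset

namespace SimpleGraph

section Neighbourhood

variable {V : Type*} [Fintype V] (G : SimpleGraph V)

open scoped Classical in
noncomputable def extNbhd (X : Finset V) : Finset V :=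
  {v | v ∉ X ∧ ∃ u ∈ X, G.Adj u v}

variable {G}

@[simp]
lemma mem_extNbhd {X : Finset V} {v : V} : v ∈ G.extNbhd X ↔ v ∉ X ∧ ∃ u ∈ X, G.Adj u v := by
  classical simp [extNbhd]

lemma coe_extNbhd (X : Finset V) : (G.extNbhd X : Set V) = nbr G X := by
  ext; simp [nbr]

@[simp]
lemma extNbhd_empty : G.extNbhd ∅ = ∅ := by
  ext; simp

lemma disjoint_extNbhd (X : Finset V) : Disjoint X (G.extNbhd X) :=
  Finset.disjoint_left.2 fun _ hv hv' => (mem_extNbhd.1 hv').1 hv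

variable [DecidableEq V]

variable (G) in
noncomputable def closedNbhd (X : Finset V) : Finset V := X ∪ G.extNbhd X

lemma mem_closedNbhd {X : Finset V} {v : V} :
    v ∈ G.closedNbhd X ↔ v ∈ X ∨ ∃ u ∈ X, G.Adj u v := by
  simp only [closedNbhd, mem_union, mem_extNbhd]
  tauto

lemma closedNbhd_union (X Y : Finset V) :
    G.closedNbhd (X ∪ Y) = G.closedNbhd X ∪ G.closedNbhd Y := by
  ext v
  simp only [mem_closedNbhd, mem_union, or_and_right, exists_or]
  exact or_or_or_comm

lemma closedNbhd_mono {X Y : Finset V} (h : X ⊆ Y) : G.closedNbhd X ⊆ G.closedNbhd Y := by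
  intro v
  simp only [mem_closedNbhd]
  rintro (hv | ⟨u, hu, huv⟩)
  exacts [Or.inl (h hv), Or.inr ⟨u, h hu, huv⟩]

lemma subset_closedNbhd (X : Finset V) : X ⊆ G.closedNbhd X := subset_union_left

lemma extNbhd_subset_closedNbhd (X : Finset V) : G.extNbhd X ⊆ G.closedNbhd X :=
  subset_union_right

lemma card_closedNbhd_sdiff (X U : Finset V) :
    #(G.closedNbhd X \ U) = #(X \ U) + #(G.extNbhd X \ U) := by
  rw [closedNbhd, union_sdiff_distrib,
    card_union_of_disjoint ((disjoint_extNbhd X).mono sdiff_subset sdiff_subset)]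

lemma card_closedNbhd (X : Finset V) : #(G.closedNbhd X) = #X + #(G.extNbhd X) := by
  simpa using card_closedNbhd_sdiff (G := G) X ∅

/-- Inherited from the closed neighbourhood, which commutes with unions. -/
lemma card_extNbhd_union_sdiff_add_le (U X Y : Finset V) :
    #(G.extNbhd (X ∪ Y) \ U) + #(G.extNbhd (X ∩ Y) \ U) ≤
      #(G.extNbhd X \ U) + #(G.extNbhd Y \ U) := by
  have hclosed : #(G.closedNbhd (X ∪ Y) \ U) + #(G.closedNbhd (X ∩ Y) \ U) ≤
      #(G.closedNbhd X \ U) + #(G.closedNbhd Y \ U) := calc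
    _ ≤ #((G.closedNbhd X \ U) ∪ (G.closedNbhd Y \ U)) +
          #((G.closedNbhd X \ U) ∩ (G.closedNbhd Y \ U)) := by
      rw [closedNbhd_union, union_sdiff_distrib]
      gcongr
      exact subset_inter (sdiff_subset_sdiff (closedNbhd_mono inter_subset_left) le_rfl)
        (sdiff_subset_sdiff (closedNbhd_mono inter_subset_right) le_rfl)
    _ = _ := card_union_add_card_inter _ _
  have hmodular := card_union_sdiff_add_card_inter_sdiff U X Y
  simp only [card_closedNbhd_sdiff] at hclosed
  omega

end Neighbourhood

section DegreeOutside

variable {α : Type*} [Fintype α] (T : SimpleGraph α)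

open scoped Classical in
noncomputable def degreeOutside (S : Finset α) (a : α) : ℕ := #{b | T.Adj a b ∧ b ∉ S}

variable {T}

lemma degreeOutside_le_ncard (S : Finset α) (a : α) :
    T.degreeOutside S a ≤ (T.neighborSet a).ncard := by
  classical
  rw [degreeOutside, ← Set.ncard_coe_finset]
  exact Set.ncard_le_ncard (fun b hb => (mem_filter.1 hb).2.1) (Set.toFinite _)

lemma degreeOutside_anti {S S' : Finset α} (h : S ⊆ S') (a : α) :
    T.degreeOutside S' a ≤ T.degreeOutside S a := by
  classical
  refine card_le_card fun b hb => ?_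
  simp only [mem_filter, mem_univ, true_and] at hb ⊢
  exact ⟨hb.1, fun hbS => hb.2 (h hbS)⟩

lemma degreeOutside_add_one_le {S S' : Finset α} {a b : α} (h : S ⊆ S') (hb : b ∈ S')
    (hbS : b ∉ S) (hab : T.Adj a b) : T.degreeOutside S' a + 1 ≤ T.degreeOutside S a := by
  classical
  refine card_lt_card ((ssubset_iff_of_subset fun c hc => ?_).2 ⟨b, ?_, ?_⟩)
  · simp only [mem_filter, mem_univ, true_and] at hc ⊢
    exact ⟨hc.1, fun hcS => hc.2 (h hcS)⟩
  · simp [hab, hbS]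
  · simp [hb]

lemma sum_degreeOutside_insert_add_le {V : Type*} [DecidableEq V] [DecidableEq α] {S : Finset α}
    {f : α → V} {x y : α}
    (hx : x ∈ S) (hy : y ∉ S) (hxy : T.Adj x y) (X : Finset V) :
    ∑ a ∈ S with f a ∈ X, (T.degreeOutside (insert y S) a : ℤ) + (if f x ∈ X then 1 else 0) ≤
      ∑ a ∈ S with f a ∈ X, (T.degreeOutside S a : ℤ) := by
  have hanti : ∀ s : Finset α, ∑ a ∈ s, (T.degreeOutside (insert y S) a : ℤ) ≤
      ∑ a ∈ s, (T.degreeOutside S a : ℤ) := fun s =>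
    sum_le_sum fun a _ => by exact_mod_cast degreeOutside_anti (subset_insert y S) a
  split_ifs with hfx
  · have hxX : x ∈ {a ∈ S | f a ∈ X} := mem_filter.2 ⟨hx, hfx⟩
    have hdeg : (T.degreeOutside (insert y S) x : ℤ) + 1 ≤ T.degreeOutside S x := by
      exact_mod_cast degreeOutside_add_one_le (subset_insert y S) (mem_insert_self y S) hy hxy
    rw [← add_sum_erase _ _ hxX, ← add_sum_erase _ _ hxX]
    linarith [hanti ({a ∈ S | f a ∈ X}.erase x)]
  · simpa using hanti _

end DegreeOutside

section Surplus

variable {V α : Type*} [Fintype V] [DecidableEq V] [Fintype α]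
  (G : SimpleGraph V) (T : SimpleGraph α) (Δ : ℕ)

noncomputable def surplus (S : Finset α) (f : α → V) (X : Finset V) : ℤ :=
  #(G.extNbhd X \ S.image f) - ∑ a ∈ S with f a ∈ X, (T.degreeOutside S a : ℤ)
    - (2 * Δ - 2) * #(X \ S.image f)

def IsExtendable (m : ℕ) (S : Finset α) (f : α → V) : Prop :=
  ∀ X : Finset V, #X ≤ 2 * m → 0 ≤ surplus G T Δ S f X

variable {G T Δ}

@[simp]
lemma surplus_empty (S : Finset α) (f : α → V) : surplus G T Δ S f ∅ = 0 := by
  simp [surplus]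

lemma surplus_union_add_surplus_inter_le (S : Finset α) (f : α → V) (X Y : Finset V) :
    surplus G T Δ S f (X ∪ Y) + surplus G T Δ S f (X ∩ Y) ≤
      surplus G T Δ S f X + surplus G T Δ S f Y := by
  classical
  have hN := card_extNbhd_union_sdiff_add_le (G := G) (S.image f) X Y
  have hX : (#((X ∪ Y) \ S.image f) : ℤ) + #((X ∩ Y) \ S.image f) =
      #(X \ S.image f) + #(Y \ S.image f) := by
    exact_mod_cast card_union_sdiff_add_card_inter_sdiff (S.image f) X Y
  have hsum : ∑ a ∈ S with f a ∈ X ∪ Y, (T.degreeOutside S a : ℤ) +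
      ∑ a ∈ S with f a ∈ X ∩ Y, (T.degreeOutside S a : ℤ) =
      ∑ a ∈ S with f a ∈ X, (T.degreeOutside S a : ℤ) +
      ∑ a ∈ S with f a ∈ Y, (T.degreeOutside S a : ℤ) := by
    rw [← sum_union_inter (s₁ := {a ∈ S | f a ∈ X}), ← filter_or, ← filter_and]
    simp only [← mem_union, ← mem_inter]
  unfold surplus
  have hX' := congrArg ((2 * (Δ : ℤ) - 2) * ·) hX
  simp only [mul_add] at hX'
  linarith

lemma card_extNbhd_sub_le_surplus (hΔ : ∀ a, (T.neighborSet a).ncard ≤ Δ) {S : Finset α}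
    {f : α → V} (hf : Set.InjOn f S) (X : Finset V) :
    (#(G.extNbhd X) : ℤ) - #(S.image f \ X) - Δ * #(X ∩ S.image f)
        - (2 * Δ - 2) * #(X \ S.image f) ≤ surplus G T Δ S f X := by
  have hN : #(G.extNbhd X) ≤ #(G.extNbhd X \ S.image f) + #(S.image f \ X) := by
    rw [← card_sdiff_add_card_inter (G.extNbhd X) (S.image f)]
    gcongr #_ + ?_
    refine card_le_card fun v hv => mem_sdiff.2 ⟨(mem_inter.1 hv).2, fun hvX => ?_⟩
    exact (mem_extNbhd.1 (mem_inter.1 hv).1).1 hvX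
  have hcard : #{a ∈ S | f a ∈ X} ≤ #(X ∩ S.image f) := by
    rw [← card_image_of_injOn (hf.mono (coe_subset.2 (filter_subset _ S)))]
    refine card_le_card fun v hv => ?_
    obtain ⟨a, ha, rfl⟩ := mem_image.1 hv
    rw [mem_filter] at ha
    exact mem_inter.2 ⟨ha.2, mem_image_of_mem f ha.1⟩
  have hsum : ∑ a ∈ S with f a ∈ X, (T.degreeOutside S a : ℤ) ≤ Δ * #(X ∩ S.image f) := calc
    _ ≤ ∑ a ∈ S with f a ∈ X, (Δ : ℤ) := sum_le_sum fun a _ => by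
      exact_mod_cast (degreeOutside_le_ncard S a).trans (hΔ a)
    _ = Δ * #{a ∈ S | f a ∈ X} := by rw [sum_const, nsmul_eq_mul, mul_comm]
    _ ≤ Δ * #(X ∩ S.image f) := by gcongr
  unfold surplus
  linarith

lemma one_le_surplus_of_le_card {n m : ℕ}
    (hlarge : ∀ X : Finset V, m ≤ #X → n + 1 ≤ #(G.closedNbhd X) + m) (h1Δ : 1 ≤ Δ)
    (hΔ : ∀ a, (T.neighborSet a).ncard ≤ Δ) {S : Finset α} {f : α → V}
    (hS : #S + 4 * Δ * m ≤ n) (hf : Set.InjOn f S) {X : Finset V} (hX₁ : m ≤ #X)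
    (hX₂ : #X ≤ 2 * m) : 1 ≤ surplus G T Δ S f X := by
  have hlow := card_extNbhd_sub_le_surplus (G := G) hΔ hf X
  have hball := hlarge X hX₁
  rw [card_closedNbhd] at hball
  have hU : #(S.image f) ≤ #S := card_image_le
  have hU' := card_sdiff_add_card_inter (S.image f) X
  have hX := card_sdiff_add_card_inter X (S.image f)
  rw [inter_comm] at hU'
  zify at hball hS hU hU' hX hX₂ h1Δ
  nlinarith [mul_nonneg (sub_nonneg.2 h1Δ) (Nat.cast_nonneg (α := ℤ) #(X ∩ S.image f)),
    mul_le_mul_of_nonneg_left hX₂ (by linarith : (0 : ℤ) ≤ 2 * Δ - 1)]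

lemma isExtendable_singleton {n m : ℕ}
    (hsmall : ∀ X : Finset V, 1 ≤ #X → #X < m → 2 * Δ * #X ≤ #(G.extNbhd X))
    (hlarge : ∀ X : Finset V, m ≤ #X → n + 1 ≤ #(G.closedNbhd X) + m) (h1Δ : 1 ≤ Δ)
    (hΔ : ∀ a, (T.neighborSet a).ncard ≤ Δ) (hn : 1 + 4 * Δ * m ≤ n) (t : α) (v : V) :
    IsExtendable G T Δ m {t} (fun _ => v) := by
  have hf : Set.InjOn (fun _ => v) (({t} : Finset α) : Set α) := by
    rw [coe_singleton]
    exact Set.injOn_singleton _ _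
  intro X hX
  obtain rfl | hX₀ := X.eq_empty_or_nonempty
  · simp
  obtain hXm | hXm := lt_or_ge #X m
  · have hlow := card_extNbhd_sub_le_surplus (G := G) hΔ hf X
    have hN := hsmall X (card_pos.2 hX₀) hXm
    have hU := card_sdiff_add_card_inter {v} X
    have hX' := card_sdiff_add_card_inter X {v}
    rw [inter_comm, card_singleton] at hU
    rw [image_singleton] at hlow
    have hX₁ := card_pos.2 hX₀
    zify at hN hU hX' hX₁
    nlinarith [mul_nonneg (Nat.cast_nonneg (α := ℤ) Δ) (Nat.cast_nonneg (α := ℤ) #(X ∩ {v}))]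
  · exact zero_le_one.trans
      (one_le_surplus_of_le_card hlarge h1Δ hΔ (by simpa [add_comm] using hn) hf hXm hX)

lemma surplus_sub_ite_le_surplus_insert [DecidableEq α] (hΔ : ∀ a, (T.neighborSet a).ncard ≤ Δ)
    {S : Finset α} {f : α → V} {x y : α} {w : V} (hx : x ∈ S) (hy : y ∉ S) (hxy : T.Adj x y)
    (hw : w ∉ S.image f) (X : Finset V) :
    surplus G T Δ S f X - (if w ∈ G.extNbhd X then 1 else 0) + (if f x ∈ X then 1 else 0) ≤
      surplus G T Δ (insert y S) (Function.update f y w) X := by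
  have hupdate : ∀ a ∈ S, Function.update f y w a = f a := fun a ha =>
    Function.update_of_ne (ne_of_mem_of_not_mem ha hy) _ _
  have himage : (insert y S).image (Function.update f y w) = insert w (S.image f) := by
    rw [image_insert, Function.update_self, image_congr hupdate]
  have hsum : ∑ a ∈ insert y S with Function.update f y w a ∈ X,
      (T.degreeOutside (insert y S) a : ℤ) =
        (if w ∈ X then (T.degreeOutside (insert y S) y : ℤ) else 0) +
          ∑ a ∈ S with f a ∈ X, (T.degreeOutside (insert y S) a : ℤ) := by
    rw [sum_filter, sum_filter, sum_insert hy, Function.update_self]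
    congr 1
    exact sum_congr rfl fun a ha => by rw [hupdate a ha]
  have hdeg_y : (T.degreeOutside (insert y S) y : ℤ) + 1 ≤ Δ := by
    exact_mod_cast (degreeOutside_add_one_le (empty_subset _) (mem_insert_of_mem hx)
      (notMem_empty x) hxy.symm).trans ((degreeOutside_le_ncard _ _).trans (hΔ y))
  have hN := card_sdiff_insert_add_ite (A := G.extNbhd X) hw
  have hX := card_sdiff_insert_add_ite (A := X) hw
  have hsum' := sum_degreeOutside_insert_add_le (f := f) hx hy hxy X
  unfold surplus
  rw [himage, hsum, ← hX, ← hN]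
  push_cast
  split_ifs at hsum' ⊢ <;> linarith

lemma exists_tight_of_not_isExtendable_insert [DecidableEq α] {m : ℕ}
    (hΔ : ∀ a, (T.neighborSet a).ncard ≤ Δ) {S : Finset α} {f : α → V} {x y : α} {w : V}
    (hx : x ∈ S) (hy : y ∉ S) (hxy : T.Adj x y) (hw : w ∉ S.image f)
    (hext : IsExtendable G T Δ m S f)
    (hnot : ¬ IsExtendable G T Δ m (insert y S) (Function.update f y w)) :
    ∃ X : Finset V, #X ≤ 2 * m ∧ surplus G T Δ S f X = 0 ∧ f x ∉ X ∧ w ∈ G.extNbhd X := by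
  simp only [IsExtendable, not_forall, not_le] at hnot
  obtain ⟨X, hX, hneg⟩ := hnot
  have hle := surplus_sub_ite_le_surplus_insert (G := G) hΔ hx hy hxy hw X
  have h0 := hext X hX
  have hwN : w ∈ G.extNbhd X := by
    by_contra h
    rw [if_neg h] at hle
    split_ifs at hle <;> linarith
  have hfx : f x ∉ X := by
    intro h
    rw [if_pos hwN, if_pos h] at hle
    linarith
  rw [if_pos hwN, if_neg hfx] at hle
  exact ⟨X, hX, by linarith, hfx, hwN⟩

lemma card_lt_of_surplus_eq_zero {n m : ℕ}
    (hlarge : ∀ X : Finset V, m ≤ #X → n + 1 ≤ #(G.closedNbhd X) + m) (h1Δ : 1 ≤ Δ)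
    (hΔ : ∀ a, (T.neighborSet a).ncard ≤ Δ) {S : Finset α} {f : α → V}
    (hS : #S + 4 * Δ * m ≤ n) (hf : Set.InjOn f S) {X : Finset V} (hX : #X ≤ 2 * m)
    (h0 : surplus G T Δ S f X = 0) : #X < m := by
  by_contra! hXm
  have := one_le_surplus_of_le_card hlarge h1Δ hΔ hS hf hXm hX
  omega

lemma surplus_union_eq_zero {m : ℕ} {S : Finset α} {f : α → V}
    (hext : IsExtendable G T Δ m S f) {X Y : Finset V} (hX : #X ≤ m) (hY : #Y ≤ m)
    (hX₀ : surplus G T Δ S f X = 0) (hY₀ : surplus G T Δ S f Y = 0) :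
    surplus G T Δ S f (X ∪ Y) = 0 := by
  have hsub := surplus_union_add_surplus_inter_le (G := G) (T := T) (Δ := Δ) S f X Y
  have hunion := hext (X ∪ Y) ((card_union_le X Y).trans (by omega))
  have hinter := hext (X ∩ Y) ((card_le_card inter_subset_left).trans (by omega))
  linarith

lemma surplus_insert_add_degreeOutside_le {S : Finset α} {f : α → V} {x : α} {Y : Finset V}
    (hx : x ∈ S) (hxY : f x ∉ Y)
    (hY : ∀ w ∉ S.image f, G.Adj (f x) w → w ∈ G.closedNbhd Y) :
    surplus G T Δ S f (insert (f x) Y) + T.degreeOutside S x ≤ surplus G T Δ S f Y := by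
  have hN : G.extNbhd (insert (f x) Y) \ S.image f ⊆ G.extNbhd Y \ S.image f := by
    intro u hu
    simp only [mem_sdiff, mem_extNbhd, mem_insert, not_or] at hu ⊢
    obtain ⟨⟨⟨-, huY⟩, z, hz, hzu⟩, huU⟩ := hu
    refine ⟨⟨huY, ?_⟩, huU⟩
    rcases hz with rfl | hz
    · exact (mem_closedNbhd.1 (hY u huU hzu)).resolve_left huY
    · exact ⟨z, hz, hzu⟩
  have hsum : ∑ a ∈ S with f a ∈ Y, (T.degreeOutside S a : ℤ) + T.degreeOutside S x ≤
      ∑ a ∈ S with f a ∈ insert (f x) Y, (T.degreeOutside S a : ℤ) := by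
    classical
    have hxY' : x ∉ {a ∈ S | f a ∈ Y} := fun h => hxY (mem_filter.1 h).2
    rw [add_comm, ← sum_insert (f := fun a => (T.degreeOutside S a : ℤ)) hxY']
    refine sum_le_sum_of_subset_of_nonneg (insert_subset (by simp [hx]) fun a ha => ?_)
      fun _ _ _ => by positivity
    simp only [mem_filter, mem_insert] at ha ⊢
    exact ⟨ha.1, Or.inr ha.2⟩
  have hX : insert (f x) Y \ S.image f = Y \ S.image f :=
    insert_sdiff_of_mem _ (mem_image_of_mem f hx)
  have hNcard : (#(G.extNbhd (insert (f x) Y) \ S.image f) : ℤ) ≤ #(G.extNbhd Y \ S.image f) := by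
    exact_mod_cast card_le_card hN
  unfold surplus
  rw [hX]
  linarith

lemma card_sup_lt_and_surplus_sup_eq_zero {n m : ℕ}
    (hlarge : ∀ X : Finset V, m ≤ #X → n + 1 ≤ #(G.closedNbhd X) + m) (h1Δ : 1 ≤ Δ)
    (hΔ : ∀ a, (T.neighborSet a).ncard ≤ Δ) (hm : 1 ≤ m) {S : Finset α} {f : α → V}
    (hS : #S + 4 * Δ * m ≤ n) (hf : Set.InjOn f S) (hext : IsExtendable G T Δ m S f)
    {ι : Type*} {C : Finset ι} {X : ι → Finset V}
    (hX : ∀ i ∈ C, #(X i) < m ∧ surplus G T Δ S f (X i) = 0) :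
    #(C.sup X) < m ∧ surplus G T Δ S f (C.sup X) = 0 := by
  refine sup_induction (p := fun Z => #Z < m ∧ surplus G T Δ S f Z = 0)
    ⟨by rwa [bot_eq_empty, card_empty], surplus_empty S f⟩ (fun X₁ h₁ X₂ h₂ => ?_) hX
  have h₀ := surplus_union_eq_zero hext h₁.1.le h₂.1.le h₁.2 h₂.2
  exact ⟨card_lt_of_surplus_eq_zero hlarge h1Δ hΔ hS hf
    ((card_union_le X₁ X₂).trans (by omega)) h₀, h₀⟩

/-- If no neighbour `w` of `f x` could take `y`, each would lie in `N(X w)` for a tight set `X w`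
(surplus zero) avoiding `f x`. Tight sets are small, hence closed under union by submodularity,
and adding `f x` to the union of all the `X w` gives a set of negative surplus. -/
theorem exists_isExtendable_insert [DecidableEq α] {n m : ℕ}
    (hlarge : ∀ X : Finset V, m ≤ #X → n + 1 ≤ #(G.closedNbhd X) + m) (h1Δ : 1 ≤ Δ)
    (hΔ : ∀ a, (T.neighborSet a).ncard ≤ Δ) (hm : 1 ≤ m) {S : Finset α} {f : α → V} {x y : α}
    (hS : #S + 4 * Δ * m ≤ n) (hf : Set.InjOn f S) (hx : x ∈ S) (hy : y ∉ S) (hxy : T.Adj x y)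
    (hext : IsExtendable G T Δ m S f) :
    ∃ w ∉ S.image f, G.Adj (f x) w ∧
      IsExtendable G T Δ m (insert y S) (Function.update f y w) := by
  classical
  by_contra! hno
  set C : Finset V := {w | G.Adj (f x) w ∧ w ∉ S.image f}
  have htight : ∀ w ∈ C, ∃ X : Finset V,
      #X < m ∧ surplus G T Δ S f X = 0 ∧ f x ∉ X ∧ w ∈ G.extNbhd X := by
    intro w hw
    obtain ⟨hxw, hw⟩ := (mem_filter.1 hw).2
    obtain ⟨X, hX, hX₀, hxX, hwX⟩ :=
      exists_tight_of_not_isExtendable_insert hΔ hx hy hxy hw hext (hno w hw hxw)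
    exact ⟨X, card_lt_of_surplus_eq_zero hlarge h1Δ hΔ hS hf hX hX₀, hX₀, hxX, hwX⟩
  choose! X hX using htight
  obtain ⟨hYm, hY₀⟩ := card_sup_lt_and_surplus_sup_eq_zero hlarge h1Δ hΔ hm hS hf hext
    fun w hw => ⟨(hX w hw).1, (hX w hw).2.1⟩
  have hxY : f x ∉ C.sup X := by
    simp only [mem_sup, not_exists, not_and]
    exact fun w hw => (hX w hw).2.2.1
  have hcover : ∀ w ∉ S.image f, G.Adj (f x) w → w ∈ G.closedNbhd (C.sup X) := fun w hw hxw =>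
    have hwC : w ∈ C := mem_filter.2 ⟨mem_univ w, hxw, hw⟩
    closedNbhd_mono (le_sup hwC) (extNbhd_subset_closedNbhd _ (hX w hwC).2.2.2)
  have hdrop := surplus_insert_add_degreeOutside_le (T := T) (Δ := Δ) hx hxY hcover
  have hnonneg := hext (insert (f x) (C.sup X)) ((card_insert_le _ _).trans (by omega))
  have hdeg := degreeOutside_add_one_le (subset_insert y S) (mem_insert_self y S) hy hxy
  omega

end Surplus

section Tree

variable {α V : Type*} {T : SimpleGraph α} {G : SimpleGraph V}

def ReachableWithin (T : SimpleGraph α) (t : α) (S : Finset α) : Prop :=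
  ∀ z ∈ S, ∃ p : T.Walk t z, ∀ b ∈ p.support, b ∈ S

lemma reachableWithin_singleton (t : α) : T.ReachableWithin t {t} := by
  intro z hz
  rw [mem_singleton] at hz
  subst hz
  exact ⟨.nil, by simp⟩

lemma ReachableWithin.insert [DecidableEq α] {t x y : α} {S : Finset α}
    (h : T.ReachableWithin t S) (hx : x ∈ S) (hxy : T.Adj x y) :
    T.ReachableWithin t (insert y S) := by
  intro z hz
  rcases mem_insert.1 hz with rfl | hz
  · obtain ⟨p, hp⟩ := h x hx
    refine ⟨p.concat hxy, fun b hb => ?_⟩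
    rw [Walk.support_concat, List.mem_append, List.mem_singleton] at hb
    rcases hb with hb | rfl
    exacts [mem_insert_of_mem (hp b hb), mem_insert_self _ _]
  · obtain ⟨p, hp⟩ := h z hz
    exact ⟨p, fun b hb => mem_insert_of_mem (hp b hb)⟩

/-- Two neighbours of `y` in `S` would close a cycle through `S`. -/
lemma IsAcyclic.eq_of_adj_of_reachableWithin [DecidableEq α] (hT : T.IsAcyclic) {t x₁ x₂ y : α}
    {S : Finset α} (hS : T.ReachableWithin t S) (hy : y ∉ S) (h₁ : x₁ ∈ S) (h₂ : x₂ ∈ S)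
    (hy₁ : T.Adj y x₁) (hy₂ : T.Adj y x₂) : x₂ = x₁ := by
  obtain ⟨p₁, hp₁⟩ := hS x₁ h₁
  obtain ⟨p₂, hp₂⟩ := hS x₂ h₂
  let q := (p₁.reverse.append p₂).bypass
  have hyq : y ∉ q.support := fun h => by
    have := Walk.support_bypass_subset_support _ h
    rw [Walk.mem_support_append_iff, Walk.support_reverse, List.mem_reverse] at this
    exact hy (this.elim (hp₁ y) (hp₂ y))
  simpa using hT.eq_snd_of_adj_start ((Walk.bypass_isPath _).cons (h := hy₁) hyq) hy₂ (by simp)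

structure IsPartialEmbedding (T : SimpleGraph α) (G : SimpleGraph V) (S : Finset α)
    (f : α → V) : Prop where
  injOn : Set.InjOn f S
  map_adj : ∀ ⦃a b⦄, a ∈ S → b ∈ S → T.Adj a b → G.Adj (f a) (f b)

lemma isPartialEmbedding_singleton (t : α) (v : V) :
    IsPartialEmbedding T G {t} (fun _ => v) where
  injOn := by
    rw [coe_singleton]
    exact Set.injOn_singleton _ _
  map_adj a b ha hb hab := by
    rw [mem_singleton] at ha hb
    subst ha hb
    exact (T.irrefl hab).elim

lemma IsPartialEmbedding.insert [DecidableEq α] [DecidableEq V] {S : Finset α} {f : α → V}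
    {x y : α} {w : V} (hf : IsPartialEmbedding T G S f) (hy : y ∉ S) (hw : w ∉ S.image f)
    (hxw : G.Adj (f x) w) (hparent : ∀ b ∈ S, T.Adj y b → b = x) :
    IsPartialEmbedding T G (insert y S) (Function.update f y w) := by
  have hupdate : Set.EqOn (Function.update f y w) f S := fun a ha =>
    Function.update_of_ne (ne_of_mem_of_not_mem ha hy) _ _
  constructor
  · rw [coe_insert, Set.injOn_insert hy, hupdate.image_eq, Function.update_self, ← coe_image]
    exact ⟨hf.injOn.congr hupdate.symm, hw⟩
  · intro a b ha hb hab
    rcases mem_insert.1 ha with rfl | haS <;> rcases mem_insert.1 hb with rfl | hbS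
    · exact (T.irrefl hab).elim
    · rw [Function.update_self, hupdate hbS, hparent b hbS hab]
      exact hxw.symm
    · rw [Function.update_self, hupdate haS, hparent a haS hab.symm]
      exact hxw
    · rw [hupdate haS, hupdate hbS]
      exact hf.map_adj haS hbS hab

theorem exists_embedding_of_isExtendable [Fintype α] [DecidableEq α] [Fintype V] [DecidableEq V]
    {n m Δ : ℕ} (hT : T.IsTree)
    (hlarge : ∀ X : Finset V, m ≤ #X → n + 1 ≤ #(G.closedNbhd X) + m) (h1Δ : 1 ≤ Δ)
    (hΔ : ∀ a, (T.neighborSet a).ncard ≤ Δ) (hm : 1 ≤ m)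
    (hcard : Fintype.card α + 4 * Δ * m ≤ n) {t : α} {v : V} (S : Finset α) (f : α → V)
    (ht : t ∈ S) (hS : T.ReachableWithin t S) (hf : IsPartialEmbedding T G S f) (hft : f t = v)
    (hext : IsExtendable G T Δ m S f) :
    ∃ g : T →g G, Function.Injective g ∧ g t = v := by
  by_cases hSu : S = univ
  · subst hSu
    exact ⟨⟨f, hf.map_adj (mem_univ _) (mem_univ _)⟩,
      fun a b h => hf.injOn (by simp) (by simp) h, hft⟩
  obtain ⟨z, hz⟩ : ∃ z, z ∉ S := by simpa [eq_univ_iff_forall] using hSu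
  obtain ⟨d, -, hdx, hdy⟩ :=
    (hT.connected.preconnected t z).some.exists_boundary_dart (S : Set α) ht hz
  have hdy' : d.snd ∉ S := hdy
  obtain ⟨w, hw, hxw, hext'⟩ := exists_isExtendable_insert hlarge h1Δ hΔ hm
    (by have := card_le_univ S; omega) hf.injOn hdx hdy' d.adj hext
  have hparent : ∀ b ∈ S, T.Adj d.snd b → b = d.fst := fun b hb hyb =>
    hT.isAcyclic.eq_of_adj_of_reachableWithin hS hdy' hdx hb d.adj.symm hyb
  exact exists_embedding_of_isExtendable hT hlarge h1Δ hΔ hm hcard (insert d.snd S)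
    (Function.update f d.snd w) (mem_insert_of_mem ht) (hS.insert hdx d.adj)
    (hf.insert hdy' hw hxw hparent)
    (by rw [Function.update_of_ne (ne_of_mem_of_not_mem ht hdy')]; exact hft) hext'
termination_by Fintype.card α - #S
decreasing_by
  have := card_le_univ (insert d.snd S)
  rw [card_insert_of_notMem hdy'] at this ⊢
  omega

end Tree

end SimpleGraph

section Expander

variable {V : Type*} [Fintype V] {G : SimpleGraph V} {n : ℕ} {d : ℝ}

lemma IsExpander.two_mul_card_le_card_extNbhd {Δ : ℕ} (hG : IsExpander G n d)
    (hd : 2 * (Δ : ℝ) ≤ d) {X : Finset V} (h₁ : 1 ≤ #X) (h₂ : #X < ⌈(n : ℝ) / (2 * d)⌉₊) :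
    2 * Δ * #X ≤ #(G.extNbhd X) := by
  have h := hG.2.1 X h₁ h₂
  rw [← SimpleGraph.coe_extNbhd, Set.ncard_coe_finset] at h
  have : (2 * Δ * #X : ℝ) ≤ d * #X := by gcongr
  exact_mod_cast this.trans h

lemma IsExpander.add_card_closedNbhd [DecidableEq V] (hG : IsExpander G n d) {X : Finset V}
    (hX : ⌈(n : ℝ) / (2 * d)⌉₊ ≤ #X) : n + 1 ≤ #(G.closedNbhd X) + ⌈(n : ℝ) / (2 * d)⌉₊ := by
  by_contra! h
  obtain ⟨X', hX'X, hX'⟩ := exists_subset_card_eq hX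
  obtain ⟨Y, hY, hYcard⟩ :=
    exists_subset_card_eq (s := (G.closedNbhd X)ᶜ) (n := ⌈(n : ℝ) / (2 * d)⌉₊) (by
      rw [card_compl, hG.1]
      omega)
  have hdisj : Disjoint X' Y :=
    disjoint_compl_right.mono (hX'X.trans (SimpleGraph.subset_closedNbhd X)) hY
  obtain ⟨x, hx, y, hy, hxy⟩ := hG.2.2 X' Y hdisj hX' hYcard
  exact mem_compl.1 (hY hy) (SimpleGraph.mem_closedNbhd.2 (Or.inr ⟨x, hX'X hx, hxy⟩))

end Expander

/-- If `d ≥ 2Δ` and `G` is an `(n,d)`-expander, then every tree `T` on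
`n - 4Δ⌈n/2d⌉` vertices with maximum degree at most `Δ` embeds into `G`, with any
prescribed vertex `t` of `T` embedded onto any prescribed vertex `v` of `G`. -/
theorem stmt18 (n Δ : ℕ) (d : ℝ) (hd : 2 * (Δ : ℝ) ≤ d) {V : Type*} [Fintype V]
    (G : SimpleGraph V) (hG : IsExpander G n d)
    (T : SimpleGraph (Fin (n - 4 * Δ * ⌈(n : ℝ) / (2 * d)⌉₊))) (hT : T.IsTree)
    (hdeg : ∀ x, (T.neighborSet x).ncard ≤ Δ)
    (v : V) (t : Fin (n - 4 * Δ * ⌈(n : ℝ) / (2 * d)⌉₊)) :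
    ∃ f : T →g G, Function.Injective f ∧ f t = v := by
  classical
  rcases subsingleton_or_nontrivial (Fin (n - 4 * Δ * ⌈(n : ℝ) / (2 * d)⌉₊)) with hα | hα
  · exact ⟨⟨fun _ => v, fun {a b} h => (T.irrefl (Subsingleton.elim a b ▸ h)).elim⟩,
      fun a b _ => Subsingleton.elim a b, rfl⟩
  have h1Δ : 1 ≤ Δ := by
    obtain ⟨s, hts⟩ : ∃ s, T.Adj t s := by
      simpa [SimpleGraph.IsIsolated] using hT.connected.preconnected.not_isIsolated t
    exact ((Set.ncard_pos (Set.toFinite _)).2 ⟨s, hts⟩).trans_le (hdeg t)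
  have hn : 1 < n - 4 * Δ * ⌈(n : ℝ) / (2 * d)⌉₊ := by
    simpa using Fintype.one_lt_card (α := Fin (n - 4 * Δ * ⌈(n : ℝ) / (2 * d)⌉₊))
  have hm : 1 ≤ ⌈(n : ℝ) / (2 * d)⌉₊ :=
    Nat.one_le_ceil_iff.2 (div_pos (by exact_mod_cast (by omega : 0 < n))
      (by linarith [(Nat.one_le_cast (α := ℝ)).2 h1Δ]))
  refine SimpleGraph.exists_embedding_of_isExtendable hT (fun X => hG.add_card_closedNbhd) h1Δ
    hdeg hm (by rw [Fintype.card_fin]; omega) {t} (fun _ => v) (mem_singleton_self t)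
    (SimpleGraph.reachableWithin_singleton t) (SimpleGraph.isPartialEmbedding_singleton t v) rfl ?_
  exact SimpleGraph.isExtendable_singleton (fun X => hG.two_mul_card_le_card_extNbhd hd)
    (fun X => hG.add_card_closedNbhd) h1Δ hdeg (by omega) t v
end
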